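/- arXiv:2008.06850 — 2 statements merged into one kernel-verified Lean document; each statement's English description precedes it below -/
import Mathlib

section
/- Let A be a real m×m matrix all of whose off-diagonal entries are nonnegative, and let a ∈ ℝ be such that A + aI has all entries nonnegative. Then the real number s := r(A + aI) − a, where r denotes spectral radius, is an eigenvalue of A, and every complex eigenvalue μ of A with μ ≠ s satisfies Re μ < s. In particular, A is Perron-like with principal eigenvalue s. -/
/-!
Put `B = A + aI`. Since the spectrum of `A` is that of `B` shifted by `-a`, a complex eigenvalue
`μ` of `A` with `Re μ ≥ r - a` satisfies `‖μ + a‖ ≤ r ≤ Re (μ + a)`, which forces `μ + a = r`.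
So everything rests on the weak Perron theorem: the spectral radius `r` of the nonnegative
matrix `B` is an eigenvalue. If `Bv = μv` with `‖μ‖ = r`, then `y = |v|` is nonnegative, nonzero
and satisfies `ry ≤ By`. For `t > r` the resolvent `(t - B)⁻¹ = ∑ t⁻ᵏ⁻¹ Bᵏ` is a convergent
Neumann series, hence entrywise nonnegative, so `y ≤ (t - r) (t - B)⁻¹ y`. Were `r` not in the
spectrum, the resolvent would be continuous at `r` and the right-hand side would tend to `0`
as `t ↓ r`.
-/

open Filter Topology
open scoped NNReal ENNReal

-- Any submultiplicative norm would do: only spectra and the product topology enter the statements.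
attribute [local instance] Matrix.linftyOpNormedRing Matrix.linftyOpNormedAlgebra

theorem AlgHom.map_resolvent {R A B : Type*} [CommSemiring R] [Ring A] [Ring B] [Algebra R A]
    [Algebra R B] (φ : A →ₐ[R] B) {a : A} {r : R} (h : r ∈ resolventSet R a) :
    φ (resolvent a r) = resolvent (φ a) r := by
  obtain ⟨u, hu⟩ := h
  rw [resolvent, resolvent, ← AlgHom.commutes φ r, ← map_sub, ← hu, Ring.inverse_unit,
    show φ u = Units.map (φ : A →* B) u from rfl, Ring.inverse_unit, Units.coe_map_inv]
  rfl

namespace spectrum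

theorem hasSum_resolvent_of_spectralRadius_lt {A : Type*} [NormedRing A] [NormedAlgebra ℂ A]
    [CompleteSpace A] {a : A} {k : ℂ} (hk : spectralRadius ℂ a < ‖k‖₊) :
    HasSum (fun n : ℕ => k⁻¹ ^ (n + 1) • a ^ n) (resolvent a k) := by
  have hk0 : k ≠ 0 := by
    rintro rfl
    simp at hk
  have hz : (‖k⁻¹‖₊ : ℝ≥0∞) < (spectralRadius ℂ a)⁻¹ := by
    rw [nnnorm_inv, ENNReal.coe_inv (nnnorm_ne_zero_iff.mpr hk0)]
    exact ENNReal.inv_lt_inv.mpr hk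
  obtain ⟨ρ, hzρ, hρ⟩ := ENNReal.lt_iff_exists_nnreal_btwn.mp hz
  have hρ0 : 0 < ρ := pos_of_gt (ENNReal.coe_lt_coe.mp hzρ)
  have hseries := (hasFPowerSeriesOnBall_inverse_one_sub_smul ℂ a).exchange_radius
    ((differentiableOn_inverse_one_sub_smul hρ).hasFPowerSeriesOnBall hρ0)
  have hgeom : HasSum (fun n : ℕ => k⁻¹ ^ n • a ^ n) (Ring.inverse (1 - k⁻¹ • a)) := by
    simpa [ContinuousMultilinearMap.mkPiRing_apply] using
      hseries.hasSum (mem_eball_zero_iff.mpr hzρ)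
  have hres : resolvent a k = k⁻¹ • Ring.inverse (1 - k⁻¹ • a) := by
    have h := units_smul_resolvent_self (r := Units.mk0 k hk0) (a := a)
    simp only [Units.smul_def, Units.val_mk0, Units.val_inv_eq_inv_val, resolvent, map_one] at h
    rw [← h, inv_smul_smul₀ hk0, resolvent]
  rw [hres]
  simpa [pow_succ', mul_smul] using hgeom.const_smul k⁻¹

end spectrum

namespace Matrix

variable {n : Type*} [Fintype n]

theorem mulVec_le_mulVec_of_nonneg {α : Type*} [Semiring α] [PartialOrder α] [IsOrderedRing α]
    {M : Matrix n n α} (hM : ∀ i j, 0 ≤ M i j) {v w : n → α} (h : v ≤ w) :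
    M *ᵥ v ≤ M *ᵥ w := fun i =>
  Finset.sum_le_sum fun j _ => mul_le_mul_of_nonneg_left (h j) (hM i j)

variable [DecidableEq n]

theorem ofReal_mem_spectrum_map_iff {B : Matrix n n ℝ} {x : ℝ} :
    (x : ℂ) ∈ spectrum ℂ (B.map Complex.ofReal) ↔ x ∈ spectrum ℝ B := by
  have h : algebraMap ℂ (Matrix n n ℂ) (x : ℂ) - B.map Complex.ofReal =
      (algebraMap ℝ (Matrix n n ℝ) x - B).map (↑) := by
    ext i j
    by_cases hij : i = j <;> simp [algebraMap_matrix_apply, hij]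
  have hdet (M : Matrix n n ℝ) : (M.map Complex.ofReal).det = M.det :=
    (Complex.ofRealHom.map_det M).symm
  rw [spectrum.mem_iff, spectrum.mem_iff, h, isUnit_iff_isUnit_det, isUnit_iff_isUnit_det, hdet,
    isUnit_iff_ne_zero, isUnit_iff_ne_zero, Complex.ofReal_ne_zero]

theorem mem_resolventSet_of_spectralRadius_lt {B : Matrix n n ℝ} {t : ℝ}
    (ht : spectralRadius ℂ (B.map Complex.ofReal) < ENNReal.ofReal t) :
    t ∈ resolventSet ℝ B := by
  refine spectrum.notMem_iff.mp (ofReal_mem_spectrum_map_iff.not.mp ?_)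
  refine spectrum.notMem_iff.mpr (spectrum.mem_resolventSet_of_spectralRadius_lt ?_)
  exact ht.trans_le (by simpa [← enorm_eq_nnnorm] using Real.ofReal_le_enorm t)

theorem hasSum_resolvent_of_spectralRadius_lt {B : Matrix n n ℝ} {t : ℝ}
    (ht : spectralRadius ℂ (B.map Complex.ofReal) < ENNReal.ofReal t) :
    HasSum (fun k : ℕ => t⁻¹ ^ (k + 1) • B ^ k) (resolvent B t) := by
  have htC : spectralRadius ℂ (B.map Complex.ofReal) < ‖(t : ℂ)‖₊ :=
    ht.trans_le (by simpa [← enorm_eq_nnnorm] using Real.ofReal_le_enorm t)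
  let φ : Matrix n n ℝ →ₐ[ℝ] Matrix n n ℂ := Complex.ofRealAm.mapMatrix
  have hφ : Topology.IsInducing φ :=
    Topology.IsInducing.matrix_map Complex.isometry_ofReal.isEmbedding.isInducing
  have hterms : (φ ∘ fun k : ℕ => t⁻¹ ^ (k + 1) • B ^ k) =
      fun k : ℕ => (t : ℂ)⁻¹ ^ (k + 1) • B.map Complex.ofReal ^ k := by
    funext k
    rw [Function.comp_apply, map_smul, map_pow, ← Complex.coe_smul]
    push_cast
    rfl
  have hres : resolvent (φ B) t = resolvent (B.map Complex.ofReal) (t : ℂ) := by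
    simp [φ, resolvent, IsScalarTower.algebraMap_apply ℝ ℂ (Matrix n n ℂ)]
  rw [← hφ.hasSum_iff, φ.map_resolvent (mem_resolventSet_of_spectralRadius_lt ht), hterms, hres]
  exact spectrum.hasSum_resolvent_of_spectralRadius_lt htC

theorem resolvent_apply_nonneg_of_spectralRadius_lt {B : Matrix n n ℝ} (hB : ∀ i j, 0 ≤ B i j)
    {t : ℝ} (ht : spectralRadius ℂ (B.map Complex.ofReal) < ENNReal.ofReal t) (i j : n) :
    0 ≤ resolvent B t i j := by
  have ht0 : 0 ≤ t := (ENNReal.ofReal_pos.mp (pos_of_gt ht)).le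
  refine (Pi.hasSum.mp (Pi.hasSum.mp (hasSum_resolvent_of_spectralRadius_lt ht) i) j).nonneg
    fun k => ?_
  exact mul_nonneg (pow_nonneg (inv_nonneg.mpr ht0) _) (pow_apply_nonneg hB k i j)

theorem exists_nonneg_norm_smul_le_mulVec {B : Matrix n n ℝ} (hB : ∀ i j, 0 ≤ B i j) {μ : ℂ}
    (hμ : μ ∈ spectrum ℂ (B.map Complex.ofReal)) :
    ∃ y : n → ℝ, 0 ≤ y ∧ y ≠ 0 ∧ ‖μ‖ • y ≤ B *ᵥ y := by
  rw [spectrum.mem_iff, isUnit_iff_isUnit_det, isUnit_iff_ne_zero, not_not,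
    ← exists_mulVec_eq_zero_iff] at hμ
  obtain ⟨v, hv0, hv⟩ := hμ
  have hBv : B.map Complex.ofReal *ᵥ v = μ • v := by
    rw [sub_mulVec, Algebra.algebraMap_eq_smul_one, smul_mulVec, one_mulVec,
      sub_eq_zero] at hv
    exact hv.symm
  refine ⟨fun i => ‖v i‖, fun i => norm_nonneg _, fun h => hv0 ?_, fun i => ?_⟩
  · funext i
    simpa using congr_fun h i
  calc ‖μ‖ * ‖v i‖ = ‖(B.map Complex.ofReal *ᵥ v) i‖ := by
        rw [hBv, Pi.smul_apply, smul_eq_mul, norm_mul]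
    _ ≤ ∑ j, B i j * ‖v j‖ := by
        refine (norm_sum_le _ _).trans_eq (Finset.sum_congr rfl fun j _ => ?_)
        simp only [map_apply]
        rw [norm_mul, Complex.norm_real, Real.norm_of_nonneg (hB i j)]

theorem mem_spectrum_of_smul_le_mulVec {B : Matrix n n ℝ} {r : ℝ} {y : n → ℝ} (hy0 : 0 ≤ y)
    (hy : y ≠ 0) (hBy : r • y ≤ B *ᵥ y)
    (hres : ∀ᶠ t in 𝓝[>] r, t ∈ resolventSet ℝ B ∧ ∀ i j, 0 ≤ resolvent B t i j) :
    r ∈ spectrum ℝ B := by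
  by_contra hr
  have hcont : ContinuousAt (fun t : ℝ => (t - r) • (resolvent B t *ᵥ y)) r :=
    (continuousAt_id.sub continuousAt_const).smul
      ((continuous_id.matrix_mulVec continuous_const).continuousAt.comp
        (spectrum.hasDerivAt_resolvent_const_left (spectrum.notMem_iff.mp hr)).continuousAt)
  have hlim : Tendsto (fun t : ℝ => (t - r) • (resolvent B t *ᵥ y)) (𝓝[>] r) (𝓝 0) := by
    simpa using hcont.tendsto.mono_left nhdsWithin_le_nhds
  have hle : ∀ᶠ t in 𝓝[>] r, y ≤ (t - r) • (resolvent B t *ᵥ y) := by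
    filter_upwards [hres, self_mem_nhdsWithin] with t ⟨htB, hR⟩ (hrt : r < t)
    calc y = resolvent B t *ᵥ ((algebraMap ℝ _ t - B) *ᵥ y) := by
          rw [mulVec_mulVec, resolvent, Ring.inverse_mul_cancel _ htB, one_mulVec]
      _ ≤ resolvent B t *ᵥ ((t - r) • y) := by
          refine mulVec_le_mulVec_of_nonneg hR ?_
          rw [sub_mulVec, Algebra.algebraMap_eq_smul_one, smul_mulVec, one_mulVec, sub_smul]
          exact sub_le_sub_left hBy _
      _ = (t - r) • (resolvent B t *ᵥ y) := mulVec_smul _ _ _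
  exact hy (le_antisymm (ge_of_tendsto hlim hle) hy0)

theorem ofReal_mem_spectrum_of_isGreatest_norm {B : Matrix n n ℝ} (hB : ∀ i j, 0 ≤ B i j) {r : ℝ}
    (hr : IsGreatest {x : ℝ | ∃ μ ∈ spectrum ℂ (B.map Complex.ofReal), x = ‖μ‖} r) :
    (r : ℂ) ∈ spectrum ℂ (B.map Complex.ofReal) := by
  obtain ⟨⟨μ, hμ, rfl⟩, hmax⟩ := hr
  have hρ : spectralRadius ℂ (B.map Complex.ofReal) ≤ ENNReal.ofReal ‖μ‖ :=
    iSup₂_le fun ν hν => by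
      rw [← enorm_eq_nnnorm, ← ofReal_norm]
      exact ENNReal.ofReal_le_ofReal (hmax ⟨ν, hν, rfl⟩)
  obtain ⟨y, hy0, hy, hBy⟩ := exists_nonneg_norm_smul_le_mulVec hB hμ
  rw [ofReal_mem_spectrum_map_iff]
  refine mem_spectrum_of_smul_le_mulVec hy0 hy hBy (eventually_nhdsWithin_of_forall fun t ht => ?_)
  have ht' : spectralRadius ℂ (B.map Complex.ofReal) < ENNReal.ofReal t :=
    hρ.trans_lt ((ENNReal.ofReal_lt_ofReal_iff ((norm_nonneg μ).trans_lt ht)).mpr ht)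
  exact ⟨mem_resolventSet_of_spectralRadius_lt ht',
    resolvent_apply_nonneg_of_spectralRadius_lt hB ht'⟩

end Matrix

theorem Complex.eq_ofReal_of_norm_le_of_le_re {z : ℂ} {r : ℝ} (hn : ‖z‖ ≤ r) (hre : r ≤ z.re) :
    z = r := by
  have hre' : z.re = ‖z‖ := le_antisymm (re_le_norm z) (hn.trans hre)
  have him : z.im = 0 := abs_re_eq_norm.mp (by rw [abs_of_nonneg (hre' ▸ norm_nonneg z), hre'])
  exact Complex.ext (by rw [ofReal_re]; linarith [re_le_norm z]) (by rw [ofReal_im, him])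

theorem stmt5_general {m : ℕ} (A : Matrix (Fin m) (Fin m) ℝ) (a : ℝ)
    (ha : ∀ i j, 0 ≤ (A + a • 1) i j) (r : ℝ)
    (hr : IsGreatest
      {x : ℝ | ∃ μ ∈ spectrum ℂ ((A + a • 1).map Complex.ofReal), x = ‖μ‖} r) :
    (r - a) ∈ spectrum ℝ A ∧
      ∀ μ ∈ spectrum ℂ (A.map Complex.ofReal), μ ≠ ((r - a : ℝ) : ℂ) → μ.re < r - a := by
  have hshift (z : ℂ) : z + a ∈ spectrum ℂ ((A + a • 1).map Complex.ofReal) ↔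
      z ∈ spectrum ℂ (A.map Complex.ofReal) := by
    have hmap : (A + a • 1).map Complex.ofReal =
        algebraMap ℂ (Matrix (Fin m) (Fin m) ℂ) a + A.map Complex.ofReal := by
      ext i j
      by_cases hij : i = j <;> simp [Matrix.algebraMap_matrix_apply, hij, add_comm]
    rw [hmap, spectrum.add_mem_add_iff]
  have hperron := Matrix.ofReal_mem_spectrum_of_isGreatest_norm ha hr
  refine ⟨?_, fun μ hμ hne => ?_⟩
  · rw [← Matrix.ofReal_mem_spectrum_map_iff, ← hshift]
    simpa using hperron
  · by_contra! hle
    have hnorm : ‖μ + a‖ ≤ r := hr.2 ⟨_, (hshift μ).mpr hμ, rfl⟩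
    refine hne ?_
    have hμa := Complex.eq_ofReal_of_norm_le_of_le_re hnorm
      (by rw [Complex.add_re, Complex.ofReal_re]; linarith)
    push_cast
    linear_combination hμa

/-- If all off-diagonal entries of A are nonnegative and a ∈ ℝ is such that
A + aI has all entries nonnegative, then s := r(A + aI) − a is an eigenvalue of A and every
complex eigenvalue μ ≠ s of A satisfies Re μ < s; i.e. A is Perron-like with principal
eigenvalue s. -/
theorem stmt5 {m : ℕ} (hm : 0 < m) (A : Matrix (Fin m) (Fin m) ℝ)
    (hA : ∀ i j, i ≠ j → 0 ≤ A i j) (a : ℝ)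
    (ha : ∀ i j, 0 ≤ (A + a • 1) i j) (r : ℝ)
    (hr : IsGreatest
      {x : ℝ | ∃ μ ∈ spectrum ℂ ((A + a • 1).map Complex.ofReal), x = ‖μ‖} r) :
    (r - a) ∈ spectrum ℝ A ∧
      ∀ μ ∈ spectrum ℂ (A.map Complex.ofReal), μ ≠ ((r - a : ℝ) : ℂ) → μ.re < r - a :=
  stmt5_general A a ha r hr
end

section
/- Let A be a Perron-like real m×m matrix with principal eigenvalue s, let Π₁ be the spectral projection onto GE_s(A), and let V be a nonsingular real m×m matrix. Set Y = Π₁V (applying Π₁ to each column of V), X(t) = e^{tA}V and Q_Y(t) = e^{t(A−sI)}Y. Then there exist constants B₀ > 0 and δ > 0 such that for all t ≥ 1, ‖ X(t)/‖X(t)‖ − Q_Y(t)/‖Q_Y(t)‖ ‖ ≤ B₀·e^{−δt} (in particular Q_Y(t) ≠ 0 and X(t) ≠ 0 for all such t). -/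
/-
Write `M = A - s I`. On the complement `ker Π₁` every eigenvalue of `M` has negative real part
(an eigenvalue `0` there would give a real eigenvector of `A` for `s` outside `GE_s(A)`), so the
spectral radius of `e^M (1 - Π₁)` is `< 1` and Gelfand's formula gives
`‖e^{tM} (1 - Π₁)‖ ≤ C e^{-εt}`. On the range of `Π₁` the matrix `M` is nilpotent, so
`‖e^{-tM} Π₁‖` grows only polynomially, which bounds `‖Q_Y(t)‖ = ‖e^{tM} Π₁ V‖` from below by a
multiple of `e^{-εt/2}`. Since `X(t)` is a positive multiple of
`e^{tM} V = Q_Y(t) + e^{tM} (1 - Π₁) V`, the normalized matrices differ by at most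
`2 ‖e^{tM} (1 - Π₁) V‖ / ‖Q_Y(t)‖ = O(e^{-εt/2})`.
-/

open Matrix

/-- Matrix exponential of a real square matrix. -/
noncomputable def mexp {m : ℕ} (M : Matrix (Fin m) (Fin m) ℝ) : Matrix (Fin m) (Fin m) ℝ :=
  NormedSpace.exp M

/-- Frobenius norm of a real square matrix. -/
noncomputable def fnorm {m : ℕ} (M : Matrix (Fin m) (Fin m) ℝ) : ℝ :=
  Real.sqrt (∑ i, ∑ j, (M i j) ^ 2)

/-- Euclidean norm of a vector in ℝ^m. -/
noncomputable def vnorm {m : ℕ} (x : Fin m → ℝ) : ℝ :=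
  Real.sqrt (∑ i, (x i) ^ 2)

/-- Frobenius inner product ⟨M, N⟩ = trace(Mᵀ N). -/
def finner {m : ℕ} (M N : Matrix (Fin m) (Fin m) ℝ) : ℝ :=
  ∑ i, ∑ j, M i j * N i j

/-- The generalized eigenspace GE_s(A) = {x : (A - s•I)^k x = 0 for some k ≥ 1},
as a submodule of ℝ^m. -/
def GEsub {m : ℕ} (A : Matrix (Fin m) (Fin m) ℝ) (s : ℝ) : Submodule ℝ (Fin m → ℝ) where
  carrier := {x | ∃ k : ℕ, 1 ≤ k ∧ ((A - s • 1) ^ k).mulVec x = 0}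
  zero_mem' := ⟨1, le_refl 1, Matrix.mulVec_zero _⟩
  add_mem' := by
    rintro a b ⟨k, hk, ha⟩ ⟨l, hl, hb⟩
    refine ⟨max k l, le_trans hk (le_max_left _ _), ?_⟩
    have h1 : ((A - s • 1) ^ (max k l)).mulVec a = 0 := by
      have h : (A - s • 1) ^ (max k l) = (A - s • 1) ^ (max k l - k) * (A - s • 1) ^ k := by
        rw [← pow_add]; congr 1; omega
      rw [h, ← Matrix.mulVec_mulVec, ha, Matrix.mulVec_zero]
    have h2 : ((A - s • 1) ^ (max k l)).mulVec b = 0 := by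
      have h : (A - s • 1) ^ (max k l) = (A - s • 1) ^ (max k l - l) * (A - s • 1) ^ l := by
        rw [← pow_add]; congr 1; omega
      rw [h, ← Matrix.mulVec_mulVec, hb, Matrix.mulVec_zero]
    rw [Matrix.mulVec_add, h1, h2, add_zero]
  smul_mem' := by
    rintro c a ⟨k, hk, ha⟩
    exact ⟨k, hk, by rw [Matrix.mulVec_smul, ha, smul_zero]⟩

open NormedSpace Filter
open scoped Nat

section Normalize

variable {E : Type*} [NormedAddCommGroup E] [NormedSpace ℝ E]

lemma norm_inv_norm_smul_sub_le (x : E) {y : E} (hy : y ≠ 0) :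
    ‖‖x‖⁻¹ • x - ‖y‖⁻¹ • y‖ ≤ 2 * ‖x - y‖ / ‖y‖ := by
  have hy₀ : 0 < ‖y‖ := norm_pos_iff.mpr hy
  have hscale : ‖(‖x‖⁻¹ - ‖y‖⁻¹) • x‖ ≤ ‖x - y‖ / ‖y‖ := by
    rcases eq_or_ne x 0 with rfl | hx
    · simp only [smul_zero, norm_zero]; positivity
    have hx₀ : 0 < ‖x‖ := norm_pos_iff.mpr hx
    calc ‖(‖x‖⁻¹ - ‖y‖⁻¹) • x‖ = |‖y‖ - ‖x‖| / ‖y‖ := by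
          rw [norm_smul, show ‖x‖⁻¹ - ‖y‖⁻¹ = (‖y‖ - ‖x‖) / (‖x‖ * ‖y‖) by field_simp,
            Real.norm_eq_abs, abs_div, abs_of_pos (mul_pos hx₀ hy₀)]
          field_simp
      _ ≤ ‖x - y‖ / ‖y‖ := by
          gcongr
          rw [norm_sub_rev]
          exact abs_norm_sub_norm_le y x
  calc ‖‖x‖⁻¹ • x - ‖y‖⁻¹ • y‖ = ‖‖y‖⁻¹ • (x - y) + (‖x‖⁻¹ - ‖y‖⁻¹) • x‖ := by
        rw [smul_sub, sub_smul]; abel_nf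
    _ ≤ ‖‖y‖⁻¹ • (x - y)‖ + ‖x - y‖ / ‖y‖ := (norm_add_le _ _).trans (by gcongr)
    _ = 2 * ‖x - y‖ / ‖y‖ := by
        rw [norm_smul, Real.norm_of_nonneg (inv_nonneg.mpr hy₀.le)]; ring

lemma inv_norm_smul_smul_of_pos {c : ℝ} (hc : 0 < c) (x : E) :
    ‖c • x‖⁻¹ • (c • x) = ‖x‖⁻¹ • x := by
  rw [norm_smul, Real.norm_of_nonneg hc.le, smul_smul, mul_inv, mul_right_comm,
    inv_mul_cancel₀ hc.ne', one_mul]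

end Normalize

lemma exists_forall_le_mul_of_eventually_le {u v : ℕ → ℝ} (hv : ∀ n, 0 < v n)
    (h : ∀ᶠ n in atTop, u n ≤ v n) : ∃ K, ∀ n, u n ≤ K * v n := by
  obtain ⟨N, hN⟩ := eventually_atTop.mp h
  refine ⟨1 + ∑ k ∈ Finset.range N, |u k| / v k, fun n => ?_⟩
  have hsum : 0 ≤ ∑ k ∈ Finset.range N, |u k| / v k :=
    Finset.sum_nonneg fun k _ => div_nonneg (abs_nonneg _) (hv k).le
  rcases lt_or_ge n N with hn | hn
  · have hle : |u n| / v n ≤ ∑ k ∈ Finset.range N, |u k| / v k :=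
      Finset.single_le_sum (f := fun k => |u k| / v k)
        (fun k _ => div_nonneg (abs_nonneg _) (hv k).le) (Finset.mem_range.mpr hn)
    calc u n ≤ |u n| / v n * v n := by rw [div_mul_cancel₀ _ (hv n).ne']; exact le_abs_self _
      _ ≤ _ := by gcongr; exacts [(hv n).le, by linarith]
  · nlinarith [hN n hn, hv n, mul_nonneg hsum (hv n).le]

lemma exists_norm_pow_le_mul_pow {A : Type*} [NormedRing A] [NormedAlgebra ℂ A] [CompleteSpace A]
    (a : A) {r : ℝ} (hr : spectralRadius ℂ a < ENNReal.ofReal r) :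
    ∃ K, ∀ n : ℕ, ‖a ^ n‖ ≤ K * r ^ n := by
  have hr₀ : 0 < r := ENNReal.ofReal_pos.mp (lt_of_le_of_lt bot_le hr)
  refine exists_forall_le_mul_of_eventually_le (fun n => pow_pos hr₀ n) ?_
  filter_upwards
    [(spectrum.pow_norm_pow_one_div_tendsto_nhds_spectralRadius a).eventually_lt_const hr,
      eventually_gt_atTop 0] with n hn hn₀
  have hroot : ‖a ^ n‖ ^ (1 / n : ℝ) < r :=
    (ENNReal.ofReal_lt_ofReal_iff hr₀).mp hn
  have hpos : (0 : ℝ) < n := by exact_mod_cast hn₀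
  calc ‖a ^ n‖ = (‖a ^ n‖ ^ (1 / n : ℝ)) ^ (n : ℕ) := by
        rw [← Real.rpow_natCast, ← Real.rpow_mul (norm_nonneg _), one_div_mul_cancel hpos.ne',
          Real.rpow_one]
    _ ≤ r ^ n := by gcongr

lemma exists_norm_pow_le_mul_pow_of_forall_norm_lt_one {A : Type*} [NormedRing A]
    [NormedAlgebra ℂ A] [CompleteSpace A] [Nontrivial A] {a : A}
    (ha : ∀ z ∈ spectrum ℂ a, ‖z‖ < 1) :
    ∃ K r, 0 < r ∧ r < 1 ∧ ∀ n : ℕ, ‖a ^ n‖ ≤ K * r ^ n := by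
  have hρ : spectralRadius ℂ a < 1 := by
    simpa using spectrum.spectralRadius_lt_of_forall_lt_of_nonempty (spectrum.nonempty a)
      (r := 1) (by simpa [← NNReal.coe_lt_coe] using ha)
  obtain ⟨r', hρr', hr'⟩ := exists_between hρ
  have hr'top : r' ≠ ⊤ := (hr'.trans ENNReal.one_lt_top).ne
  obtain ⟨K, hK⟩ := exists_norm_pow_le_mul_pow a (r := r'.toReal)
    (by rwa [ENNReal.ofReal_toReal hr'top])
  refine ⟨K, r'.toReal, ENNReal.toReal_pos (lt_of_le_of_lt bot_le hρr').ne' hr'top, ?_, hK⟩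
  simpa using ENNReal.toReal_strict_mono ENNReal.one_ne_top hr'

section Growth

variable {𝔸 : Type*} [NormedRing 𝔸] [NormedAlgebra ℝ 𝔸] [CompleteSpace 𝔸]

lemma exp_smul_mul_eq_sum_of_pow_mul_eq_zero {N P : 𝔸} {k : ℕ} (h : N ^ k * P = 0) (t : ℝ) :
    exp (t • N) * P = ∑ j ∈ Finset.range k, (t ^ j / j !) • (N ^ j * P) := by
  have hterm : ∀ j : ℕ, ((j ! : ℝ)⁻¹ • (t • N) ^ j) * P = (t ^ j / j !) • (N ^ j * P) := by
    intro j
    rw [smul_pow, smul_mul_assoc, smul_mul_assoc, smul_smul, div_eq_mul_inv, mul_comm]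
  rw [exp_eq_tsum ℝ, ← (expSeries_summable' (𝕂 := ℝ) (t • N)).tsum_mul_right, tsum_eq_sum]
  · exact Finset.sum_congr rfl fun j _ => hterm j
  · intro j hj
    obtain ⟨i, rfl⟩ := Nat.exists_eq_add_of_le' (not_lt.mp (Finset.mem_range.not.mp hj))
    rw [hterm, pow_add N, mul_assoc, h, mul_zero, smul_zero]

lemma exists_norm_exp_smul_mul_le_of_pow_mul_eq_zero {N P : 𝔸} {k : ℕ} (h : N ^ k * P = 0)
    {ε : ℝ} (hε : 0 < ε) : ∃ c, ∀ t : ℝ, 0 ≤ t → ‖exp (t • N) * P‖ ≤ c * Real.exp (ε * t) := by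
  refine ⟨∑ j ∈ Finset.range k, ‖N ^ j * P‖ / ε ^ j, fun t ht => ?_⟩
  have hcoef : ∀ j : ℕ, t ^ j / j ! ≤ Real.exp (ε * t) / ε ^ j := fun j => by
    rw [le_div_iff₀ (pow_pos hε j), div_mul_eq_mul_div, mul_comm, ← mul_pow]
    exact Real.pow_div_factorial_le_exp _ (by positivity) j
  rw [exp_smul_mul_eq_sum_of_pow_mul_eq_zero h, Finset.sum_mul]
  refine (norm_sum_le _ _).trans (Finset.sum_le_sum fun j _ => ?_)
  rw [norm_smul, Real.norm_of_nonneg (by positivity)]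
  calc t ^ j / j ! * ‖N ^ j * P‖ ≤ Real.exp (ε * t) / ε ^ j * ‖N ^ j * P‖ :=
        mul_le_mul_of_nonneg_right (hcoef j) (norm_nonneg _)
    _ = ‖N ^ j * P‖ / ε ^ j * Real.exp (ε * t) := by ring

end Growth

section Decay

variable {𝔸 : Type*} [NormedRing 𝔸] [NormedAlgebra ℝ 𝔸] [NormedAlgebra ℚ 𝔸] [CompleteSpace 𝔸]

lemma exp_smul_sub_smul_one (a : 𝔸) (s t : ℝ) :
    exp (t • (a - s • 1)) = Real.exp (-(s * t)) • exp (t • a) := by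
  have hsplit : t • (a - s • 1) = t • a + algebraMap ℝ 𝔸 (-(s * t)) := by
    rw [Algebra.algebraMap_eq_smul_one, smul_sub, smul_smul, neg_smul, mul_comm, sub_eq_add_neg]
  rw [hsplit, NormedSpace.exp_add_of_commute (Algebra.commutes _ _).symm, ← algebraMap_exp_comm,
    ← Real.exp_eq_exp_ℝ, ← Algebra.commutes, ← Algebra.smul_def]

lemma norm_mul_le_norm_exp_smul_neg_mul_mul {M P : 𝔸} (hP : IsIdempotentElem P)
    (hPM : Commute P M) (V : 𝔸) (t : ℝ) :
    ‖P * V‖ ≤ ‖exp (t • -M) * P‖ * ‖exp (t • M) * (P * V)‖ := by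
  have hinv : exp (t • -M) * exp (t • M) = 1 := by
    rw [← NormedSpace.exp_add_of_commute ((Commute.refl M).neg_left.smul_left _ |>.smul_right _),
      ← smul_add, neg_add_cancel, smul_zero, exp_zero]
  have hPV : exp (t • -M) * P * (exp (t • M) * (P * V)) = P * V := by
    rw [mul_assoc, ← mul_assoc P, (hPM.smul_right t).exp_right.eq, mul_assoc, ← mul_assoc P,
      hP.eq, ← mul_assoc, hinv, one_mul]
  conv_lhs => rw [← hPV]
  exact norm_mul_le _ _

lemma exp_smul_mul_eq_mul_pow_mul {M Q : 𝔸} (hQ : IsIdempotentElem Q) (hQM : Commute Q M)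
    (t : ℝ) : exp (t • M) * Q = exp ((t - ⌊t⌋₊) • M) * (exp M * Q) ^ ⌊t⌋₊ * Q := by
  set n := ⌊t⌋₊
  have hsplit : exp (t • M) = exp ((t - n) • M) * exp M ^ n := by
    rw [← NormedSpace.exp_nsmul, ← Nat.cast_smul_eq_nsmul ℝ, ← NormedSpace.exp_add_of_commute
      (((Commute.refl M).smul_left _).smul_right _), ← add_smul, sub_add_cancel]
  rw [hsplit, hQM.exp_right.symm.mul_pow]
  simp only [mul_assoc]
  rw [← pow_succ, hQ.pow_succ_eq]

lemma exists_norm_exp_smul_mul_le_of_norm_pow_le {M Q : 𝔸} (hQ : IsIdempotentElem Q)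
    (hQM : Commute Q M) {K r : ℝ} (hr₀ : 0 < r) (hr₁ : r < 1)
    (hK : ∀ n : ℕ, ‖(exp M * Q) ^ n‖ ≤ K * r ^ n) :
    ∃ C, ∃ ε > 0, ∀ t : ℝ, 0 ≤ t → ‖exp (t • M) * Q‖ ≤ C * Real.exp (-ε * t) := by
  obtain ⟨K₁, hK₁⟩ := (isCompact_Icc (a := (0 : ℝ)) (b := 1)).exists_bound_of_continuousOn
    (f := fun τ : ℝ => exp (τ • M))
    (exp_continuous.comp (continuous_id.smul continuous_const)).continuousOn
  have hK₀ : 0 ≤ K := by simpa using (norm_nonneg _).trans (hK 0)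
  have hK₁₀ : 0 ≤ K₁ := (norm_nonneg _).trans (hK₁ 0 (by simp))
  set ε := -Real.log r
  have hε : 0 < ε := neg_pos.mpr (Real.log_neg hr₀ hr₁)
  refine ⟨K₁ * K * ‖Q‖ * Real.exp ε, ε, hε, fun t ht => ?_⟩
  set n := ⌊t⌋₊
  have hτ : t - n ∈ Set.Icc (0 : ℝ) 1 :=
    ⟨sub_nonneg.mpr (Nat.floor_le ht), by linarith [Nat.lt_floor_add_one t]⟩
  have hrn : r ^ n ≤ Real.exp ε * Real.exp (-ε * t) := by
    rw [← Real.exp_add, ← Real.exp_log hr₀, ← Real.exp_nat_mul]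
    gcongr
    nlinarith [Nat.lt_floor_add_one t]
  rw [exp_smul_mul_eq_mul_pow_mul hQ hQM]
  calc ‖exp ((t - n) • M) * (exp M * Q) ^ n * Q‖
      ≤ K₁ * (K * r ^ n) * ‖Q‖ := by
        refine (norm_mul_le _ _).trans (mul_le_mul_of_nonneg_right ?_ (norm_nonneg _))
        exact (norm_mul_le _ _).trans (mul_le_mul (hK₁ _ hτ) (hK n) (norm_nonneg _) hK₁₀)
    _ ≤ K₁ * (K * (Real.exp ε * Real.exp (-ε * t))) * ‖Q‖ := by gcongr
    _ = K₁ * K * ‖Q‖ * Real.exp ε * Real.exp (-ε * t) := by ring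

lemma exists_norm_inv_norm_smul_exp_smul_mul_sub_le {M P V : 𝔸} (hP : IsIdempotentElem P)
    (hPM : Commute P M) (hPV : P * V ≠ 0) {C c ε : ℝ}
    (hdecay : ∀ t : ℝ, 0 ≤ t → ‖exp (t • M) * (1 - P)‖ ≤ C * Real.exp (-ε * t))
    (hgrowth : ∀ t : ℝ, 0 ≤ t → ‖exp (t • -M) * P‖ ≤ c * Real.exp (ε / 2 * t)) :
    ∃ B > 0, ∀ t : ℝ, 0 ≤ t → exp (t • M) * (P * V) ≠ 0 ∧
      ‖‖exp (t • M) * V‖⁻¹ • (exp (t • M) * V) -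
          ‖exp (t • M) * (P * V)‖⁻¹ • (exp (t • M) * (P * V))‖
        ≤ B * Real.exp (-(ε / 2) * t) := by
  have hC : 0 ≤ C := by simpa using (norm_nonneg _).trans (hdecay 0 le_rfl)
  have hPV₀ : 0 < ‖P * V‖ := norm_pos_iff.mpr hPV
  refine ⟨max 1 (2 * C * ‖V‖ * c / ‖P * V‖), by positivity, fun t ht => ?_⟩
  set Z := exp (t • M) * V
  set Y := exp (t • M) * (P * V)
  have hlow : ‖P * V‖ ≤ c * Real.exp (ε / 2 * t) * ‖Y‖ :=
    (norm_mul_le_norm_exp_smul_neg_mul_mul hP hPM V t).trans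
      (mul_le_mul_of_nonneg_right (hgrowth t ht) (norm_nonneg _))
  have hY : 0 < ‖Y‖ := by
    refine (norm_nonneg _).lt_of_ne fun h => ?_
    rw [← h, mul_zero] at hlow
    linarith
  have hZY : ‖Z - Y‖ ≤ C * Real.exp (-ε * t) * ‖V‖ := by
    rw [show Z - Y = exp (t • M) * (1 - P) * V by noncomm_ring]
    exact (norm_mul_le _ _).trans (by gcongr; exact hdecay t ht)
  have hexp : Real.exp (-ε * t) * Real.exp (ε / 2 * t) = Real.exp (-(ε / 2) * t) := by
    rw [← Real.exp_add]; ring_nf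
  refine ⟨norm_pos_iff.mp hY, ?_⟩
  calc ‖‖Z‖⁻¹ • Z - ‖Y‖⁻¹ • Y‖
      ≤ 2 * ‖Z - Y‖ / ‖Y‖ := norm_inv_norm_smul_sub_le Z (norm_pos_iff.mp hY)
    _ ≤ 2 * (C * Real.exp (-ε * t) * ‖V‖) * (c * Real.exp (ε / 2 * t) / ‖P * V‖) := by
        rw [div_eq_mul_inv]
        gcongr
        rw [inv_le_iff_one_le_mul₀' hY, mul_div_assoc', le_div_iff₀ hPV₀, one_mul, mul_comm]
        exact hlow
    _ = 2 * C * ‖V‖ * c / ‖P * V‖ * Real.exp (-(ε / 2) * t) := by rw [← hexp]; ring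
    _ ≤ _ := by gcongr; exact le_max_right _ _

end Decay

attribute [local instance] Matrix.frobeniusSeminormedAddCommGroup
  Matrix.frobeniusNormedAddCommGroup Matrix.frobeniusNormedRing Matrix.frobeniusNormedAlgebra

namespace Matrix

section Complexify

variable {n : Type*} [Fintype n]

lemma re_map_ofReal_mulVec (M : Matrix n n ℝ) (u : n → ℂ) (i : n) :
    ((M.map Complex.ofReal *ᵥ u) i).re = (M *ᵥ fun j => (u j).re) i := by
  simp [mulVec, dotProduct, Complex.re_sum]

lemma im_map_ofReal_mulVec (M : Matrix n n ℝ) (u : n → ℂ) (i : n) :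
    ((M.map Complex.ofReal *ᵥ u) i).im = (M *ᵥ fun j => (u j).im) i := by
  simp [mulVec, dotProduct, Complex.im_sum]

lemma map_ofReal_mulVec_eq_zero {M R : Matrix n n ℝ} (h : ∀ x, M *ᵥ x = 0 → R *ᵥ x = 0)
    {u : n → ℂ} (hu : M.map Complex.ofReal *ᵥ u = 0) : R.map Complex.ofReal *ᵥ u = 0 := by
  have hre := h _ <| funext fun i => by
    simpa [re_map_ofReal_mulVec] using congrArg Complex.re (congrFun hu i)
  have him := h _ <| funext fun i => by
    simpa [im_map_ofReal_mulVec] using congrArg Complex.im (congrFun hu i)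
  funext i
  apply Complex.ext
  · simpa [re_map_ofReal_mulVec] using congrFun hre i
  · simpa [im_map_ofReal_mulVec] using congrFun him i

lemma map_ofReal_mul (M N : Matrix n n ℝ) :
    (M * N).map Complex.ofReal = M.map Complex.ofReal * N.map Complex.ofReal :=
  Matrix.map_mul (f := Complex.ofRealHom)

lemma norm_map_ofReal (M : Matrix n n ℝ) : ‖M.map Complex.ofReal‖ = ‖M‖ := by
  simp [frobenius_norm_def]

end Complexify

variable {n : Type*} [Fintype n] [DecidableEq n]

lemma map_ofReal_pow (M : Matrix n n ℝ) (k : ℕ) :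
    (M ^ k).map Complex.ofReal = M.map Complex.ofReal ^ k :=
  map_pow (Complex.ofRealHom.mapMatrix (m := n)) M k

lemma map_ofReal_exp (M : Matrix n n ℝ) :
    (exp M).map Complex.ofReal = exp (M.map Complex.ofReal) :=
  map_exp (Complex.ofRealAm.mapMatrix (m := n))
    (LinearMap.continuous_of_finiteDimensional (Complex.ofRealAm.mapMatrix (m := n)).toLinearMap) M

lemma mem_spectrum_iff_exists_mulVec_eq_smul {K : Type*} [Field K] (A : Matrix n n K) (μ : K) :
    μ ∈ spectrum K A ↔ ∃ v, v ≠ 0 ∧ A *ᵥ v = μ • v := by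
  rw [← spectrum_toLin', ← Module.End.hasEigenvalue_iff_mem_spectrum]
  constructor
  · intro h
    obtain ⟨v, hv⟩ := h.exists_hasEigenvector
    exact ⟨v, hv.2, by simpa using hv.apply_eq_smul⟩
  · rintro ⟨v, hv0, hv⟩
    exact Module.End.hasEigenvalue_of_hasEigenvector
      ⟨Module.End.mem_eigenspace_iff.mpr (by simpa using hv), hv0⟩

lemma nonempty_of_mem_spectrum {K : Type*} [Field K] {A : Matrix n n K} {μ : K}
    (h : μ ∈ spectrum K A) : Nonempty n := by
  obtain ⟨v, hv0, -⟩ := (mem_spectrum_iff_exists_mulVec_eq_smul A μ).mp h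
  exact not_isEmpty_iff.mp fun _ => hv0 (Subsingleton.elim _ _)

lemma pow_card_mulVec_eq_zero {K : Type*} [Field K] {N : Matrix n n K} {x : n → K} {k : ℕ}
    (h : N ^ k *ᵥ x = 0) : N ^ Fintype.card n *ᵥ x = 0 := by
  have hx : x ∈ LinearMap.ker (toLinAlgEquiv' N ^ k) := by
    simpa [← map_pow, toLinAlgEquiv'_apply] using h
  simpa [← map_pow, toLinAlgEquiv'_apply] using
    Module.End.ker_pow_le_ker_pow_finrank (toLinAlgEquiv' N) k hx

lemma pow_mulVec_of_mulVec_eq_smul {R : Type*} [CommRing R] {N : Matrix n n R} {u : n → R} {μ : R}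
    (h : N *ᵥ u = μ • u) (k : ℕ) : N ^ k *ᵥ u = μ ^ k • u := by
  induction k with
  | zero => simp
  | succ k ih => rw [pow_succ, ← mulVec_mulVec, h, mulVec_smul, ih, smul_smul, pow_succ']

lemma exp_mulVec_of_mulVec_eq_smul {N : Matrix n n ℂ} {u : n → ℂ} {μ : ℂ}
    (h : N *ᵥ u = μ • u) : exp N *ᵥ u = Complex.exp μ • u := by
  have hN := (exp_series_hasSum_exp' (𝕂 := ℂ) N).map (mulVec.addMonoidHomLeft u)
    (continuous_id.matrix_mulVec continuous_const)
  have hμ := (exp_series_hasSum_exp' (𝕂 := ℂ) μ).smul_const u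
  rw [Complex.exp_eq_exp_ℂ]
  refine hN.unique (hμ.congr_fun fun k => ?_)
  simp [mulVec.addMonoidHomLeft, smul_mulVec, pow_mulVec_of_mulVec_eq_smul h, smul_smul]

lemma exists_eigenvector_of_mem_spectrum_exp_mul {N Q : Matrix n n ℂ} (hQ : IsIdempotentElem Q)
    (hQN : Commute Q N) {z : ℂ} (hz : z ∈ spectrum ℂ (exp N * Q)) (hz0 : z ≠ 0) :
    ∃ μ u, u ≠ 0 ∧ N *ᵥ u = μ • u ∧ Q *ᵥ u = u ∧ Complex.exp μ = z := by
  set D := exp N * Q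
  have hQD : Q * D = D := by
    rw [← mul_assoc, hQN.exp_right.eq, mul_assoc, hQ.eq]
  have hND : Commute (toLin' D) (toLin' N) := by
    refine Commute.map ?_ (toLinAlgEquiv' (R := ℂ) (n := n))
    exact (Commute.refl N).exp_left.mul_left hQN
  obtain ⟨v, hv⟩ := ((Module.End.hasEigenvalue_iff_mem_spectrum (f := toLin' D)).mpr
    (by rwa [spectrum_toLin'])).exists_hasEigenvector
  have : Nontrivial (Module.End.eigenspace (toLin' D) z) :=
    ⟨⟨⟨v, hv.1⟩, 0, fun h => hv.2 (congrArg Subtype.val h)⟩⟩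
  obtain ⟨μ, hμ⟩ := Module.End.exists_eigenvalue
    ((toLin' N).restrict (Module.End.mapsTo_genEigenspace_of_comm hND z 1))
  obtain ⟨⟨u, huE⟩, hu⟩ := hμ.exists_hasEigenvector
  have hu0 : u ≠ 0 := fun h => hu.2 (Subtype.ext h)
  have hNu : N *ᵥ u = μ • u := congrArg Subtype.val hu.apply_eq_smul
  have hDu : D *ᵥ u = z • u := by simpa using Module.End.mem_eigenspace_iff.mp huE
  have hQu : Q *ᵥ u = u := by
    have : z • Q *ᵥ u = z • u := by rw [← mulVec_smul, ← hDu, mulVec_mulVec, hQD, hDu]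
    exact smul_right_injective _ hz0 this
  refine ⟨μ, u, hu0, hNu, hQu, ?_⟩
  have : Complex.exp μ • u = z • u := by
    rw [← hDu, ← mulVec_mulVec, hQu, exp_mulVec_of_mulVec_eq_smul hNu]
  exact smul_left_injective ℂ hu0 this

lemma exists_norm_exp_smul_mul_le [Nonempty n] {M Q : Matrix n n ℝ} (hQ : IsIdempotentElem Q)
    (hQM : Commute Q M)
    (hre : ∀ (μ : ℂ) (u : n → ℂ), u ≠ 0 → M.map Complex.ofReal *ᵥ u = μ • u →
      Q.map Complex.ofReal *ᵥ u = u → μ.re < 0) :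
    ∃ C, ∃ ε > 0, ∀ t : ℝ, 0 ≤ t → ‖exp (t • M) * Q‖ ≤ C * Real.exp (-ε * t) := by
  have hspec : ∀ z ∈ spectrum ℂ ((exp M * Q).map Complex.ofReal), ‖z‖ < 1 := by
    rw [map_ofReal_mul, map_ofReal_exp]
    intro z hz
    rcases eq_or_ne z 0 with rfl | hz0
    · simp
    obtain ⟨μ, u, hu0, hMu, hQu, rfl⟩ := exists_eigenvector_of_mem_spectrum_exp_mul
      (hQ.map (Complex.ofRealHom.mapMatrix (m := n)))
      (hQM.map (Complex.ofRealHom.mapMatrix (m := n))) hz hz0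
    rw [Complex.norm_exp]
    exact Real.exp_lt_one_iff.mpr (hre μ u hu0 hMu hQu)
  obtain ⟨K, r, hr₀, hr₁, hK⟩ := exists_norm_pow_le_mul_pow_of_forall_norm_lt_one hspec
  refine exists_norm_exp_smul_mul_le_of_norm_pow_le (K := K) hQ hQM hr₀ hr₁ fun k => ?_
  have := hK k
  rw [← map_ofReal_pow, norm_map_ofReal] at this
  exact this

lemma re_lt_zero_of_perron {A Q : Matrix n n ℝ} {s : ℝ}
    (hperron : ∀ μ ∈ spectrum ℂ (A.map Complex.ofReal), μ ≠ (s : ℂ) → μ.re < s)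
    (hker : ∀ x, (A - s • 1) *ᵥ x = 0 → Q *ᵥ x = 0) {μ : ℂ} {u : n → ℂ} (hu : u ≠ 0)
    (hMu : (A - s • 1).map Complex.ofReal *ᵥ u = μ • u) (hQu : Q.map Complex.ofReal *ᵥ u = u) :
    μ.re < 0 := by
  have hμ : μ ≠ 0 := by
    rintro rfl
    exact hu (hQu ▸ map_ofReal_mulVec_eq_zero hker (by rw [hMu, zero_smul]))
  have hAu : A.map Complex.ofReal *ᵥ u = (μ + s) • u := by
    have hA : A.map Complex.ofReal = (A - s • 1).map Complex.ofReal + (s : ℂ) • 1 := by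
      ext i j
      by_cases h : i = j <;> simp [h]
    rw [hA, add_mulVec, hMu, smul_mulVec, one_mulVec, add_smul]
  have := hperron _ ((mem_spectrum_iff_exists_mulVec_eq_smul _ _).mpr ⟨u, hu, hAu⟩)
    (by simpa using hμ)
  simpa using this

end Matrix

section GeneralizedEigenspace

variable {m : ℕ} {A P : Matrix (Fin m) (Fin m) ℝ} {s : ℝ}

lemma mulVec_eq_self_of_range_eq_GEsub (hPidem : P * P = P)
    (hPrange : Set.range P.mulVec = (GEsub A s : Set (Fin m → ℝ))) {x : Fin m → ℝ}
    (hx : (A - s • 1) *ᵥ x = 0) : P *ᵥ x = x := by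
  obtain ⟨y, rfl⟩ : x ∈ Set.range P.mulVec := hPrange ▸ ⟨1, le_rfl, by rwa [pow_one]⟩
  rw [mulVec_mulVec, hPidem]

lemma pow_mul_eq_zero_of_range_eq_GEsub
    (hPrange : Set.range P.mulVec = (GEsub A s : Set (Fin m → ℝ))) :
    (A - s • 1) ^ m * P = 0 := by
  refine mulVec_injective (funext fun x => ?_)
  obtain ⟨k, -, hk⟩ : P *ᵥ x ∈ (GEsub A s : Set (Fin m → ℝ)) := hPrange ▸ ⟨x, rfl⟩
  simpa [← mulVec_mulVec] using pow_card_mulVec_eq_zero hk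

lemma mul_ne_zero_of_range_eq_GEsub (hs : s ∈ spectrum ℝ A) (hPidem : P * P = P)
    (hPrange : Set.range P.mulVec = (GEsub A s : Set (Fin m → ℝ))) {V : Matrix (Fin m) (Fin m) ℝ}
    (hV : IsUnit V) : P * V ≠ 0 := by
  obtain ⟨v, hv0, hAv⟩ := (mem_spectrum_iff_exists_mulVec_eq_smul A s).mp hs
  have hPv : P *ᵥ v = v := mulVec_eq_self_of_range_eq_GEsub hPidem hPrange
    (by rw [sub_mulVec, hAv, smul_mulVec, one_mulVec, sub_self])
  rw [Ne, hV.mul_left_eq_zero]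
  rintro rfl
  exact hv0 (hPv.symm.trans (zero_mulVec v))

end GeneralizedEigenspace

lemma fnorm_eq_norm {m : ℕ} (M : Matrix (Fin m) (Fin m) ℝ) : fnorm M = ‖M‖ := by
  rw [fnorm, frobenius_norm_def, Real.sqrt_eq_rpow]
  simp [Real.norm_eq_abs, sq_abs]

/-- For a Perron-like matrix A with principal eigenvalue s, spectral projection
P onto GE_s(A) and nonsingular V, with X(t) = e^{tA}V and Q_Y(t) = e^{t(A−sI)}(PV), there are
B₀, δ > 0 with ‖X(t)/‖X(t)‖ − Q_Y(t)/‖Q_Y(t)‖‖ ≤ B₀ e^{−δt} for t ≥ 1 (and both nonzero). -/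
theorem stmt6 {m : ℕ} (A : Matrix (Fin m) (Fin m) ℝ) (s : ℝ)
    (hs : s ∈ spectrum ℝ A)
    (hperron : ∀ μ ∈ spectrum ℂ (A.map Complex.ofReal), μ ≠ (s : ℂ) → μ.re < s)
    (P : Matrix (Fin m) (Fin m) ℝ)
    (hPidem : P * P = P) (hPcomm : P * A = A * P)
    (hPrange : Set.range P.mulVec = (GEsub A s : Set (Fin m → ℝ)))
    (V : Matrix (Fin m) (Fin m) ℝ) (hV : IsUnit V) :
    ∃ B₀ : ℝ, 0 < B₀ ∧ ∃ δ : ℝ, 0 < δ ∧ ∀ t : ℝ, 1 ≤ t →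
      mexp (t • (A - s • 1)) * (P * V) ≠ 0 ∧
      mexp (t • A) * V ≠ 0 ∧
      fnorm ((fnorm (mexp (t • A) * V))⁻¹ • (mexp (t • A) * V) -
          (fnorm (mexp (t • (A - s • 1)) * (P * V)))⁻¹ • (mexp (t • (A - s • 1)) * (P * V)))
        ≤ B₀ * Real.exp (-δ * t) := by
  set M := A - s • 1
  have : Nonempty (Fin m) := nonempty_of_mem_spectrum hs
  have hP : IsIdempotentElem P := hPidem
  have hPM : Commute P M :=
    (show Commute P A from hPcomm).sub_right ((Commute.one_right P).smul_right s)
  have hker : ∀ x, M *ᵥ x = 0 → (1 - P) *ᵥ x = 0 := fun x hx => by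
    rw [sub_mulVec, one_mulVec, mulVec_eq_self_of_range_eq_GEsub hPidem hPrange hx, sub_self]
  obtain ⟨C, ε, hε, hdecay⟩ := exists_norm_exp_smul_mul_le hP.one_sub
    ((Commute.one_left M).sub_left hPM) fun _ _ hu hMu hQu =>
      re_lt_zero_of_perron hperron hker hu hMu hQu
  obtain ⟨c, hgrowth⟩ := exists_norm_exp_smul_mul_le_of_pow_mul_eq_zero (N := -M) (k := m)
    (by rw [neg_pow, mul_assoc, pow_mul_eq_zero_of_range_eq_GEsub hPrange, mul_zero]) (half_pos hε)
  obtain ⟨B, hB, hconv⟩ := exists_norm_inv_norm_smul_exp_smul_mul_sub_le hP hPM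
    (mul_ne_zero_of_range_eq_GEsub hs hPidem hPrange hV) hdecay hgrowth
  refine ⟨B, hB, ε / 2, half_pos hε, fun t ht => ?_⟩
  obtain ⟨hY, hdist⟩ := hconv t (by linarith)
  have hZX : exp (t • M) * V = Real.exp (-(s * t)) • (exp (t • A) * V) :=
    (congrArg (· * V) (exp_smul_sub_smul_one A s t)).trans (smul_mul_assoc _ _ _)
  refine ⟨hY, ((NormedSpace.isUnit_exp _).mul hV).ne_zero, ?_⟩
  simp only [fnorm_eq_norm, mexp]
  rwa [← inv_norm_smul_smul_of_pos (Real.exp_pos (-(s * t))), ← hZX]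
end
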